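/- Every nontrivial submodule of a Whittaker module of type φ for W(2,2) contains a nontrivial Whittaker submodule of type φ. -/

import Mathlib

/-- The `W`-algebra `W(2,2)`: a complex Lie algebra with basis
`{L n, W n : n ∈ ℤ} ∪ {z}` (indexed by `(Bool × ℤ) ⊕ Unit`, where `(true, n)` corresponds
to `L n`, `(false, n)` to `W n` and `Sum.inr ()` to `z`) and brackets
`[L n, L m] = (m-n)•L (n+m) + ((n³-n)/12)δ_{n+m,0}•z`,
`[L n, W m] = (m-n)•W (n+m) + ((n³-n)/12)δ_{n+m,0}•z`,
`[W n, W m] = [z, L m] = [z, W m] = 0`. -/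
structure W22 where
  carrier : Type
  [isLieRing : LieRing carrier]
  [isLieAlgebra : LieAlgebra ℂ carrier]
  L : ℤ → carrier
  W : ℤ → carrier
  z : carrier
  basis : Module.Basis ((Bool × ℤ) ⊕ Unit) ℂ carrier
  basis_eq : ∀ i, basis i = Sum.elim (fun p => if p.1 then L p.2 else W p.2) (fun _ => z) i
  bracket_LL : ∀ n m : ℤ, ⁅L n, L m⁆ =
    ((m : ℂ) - n) • L (n + m) + (if n + m = 0 then (((n : ℂ) ^ 3 - n) / 12) else 0) • z
  bracket_LW : ∀ n m : ℤ, ⁅L n, W m⁆ =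
    ((m : ℂ) - n) • W (n + m) + (if n + m = 0 then (((n : ℂ) ^ 3 - n) / 12) else 0) • z
  bracket_WW : ∀ n m : ℤ, ⁅W n, W m⁆ = 0
  bracket_zL : ∀ m : ℤ, ⁅z, L m⁆ = 0
  bracket_zW : ∀ m : ℤ, ⁅z, W m⁆ = 0

attribute [instance] W22.isLieRing W22.isLieAlgebra

attribute [instance 100] LieRing.ofAssociativeRing

/-- The positive part `W_+` of `W(2,2)`, the Lie subalgebra spanned by
`{L n, W n : n ≥ 1}`. -/
noncomputable def W22.Wplus (g : W22) : LieSubalgebra ℂ g.carrier :=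
  LieSubalgebra.lieSpan ℂ g.carrier {v | ∃ n : ℤ, 1 ≤ n ∧ (v = g.L n ∨ v = g.W n)}

lemma W22.L_mem_Wplus (g : W22) {n : ℤ} (h : 1 ≤ n) : g.L n ∈ g.Wplus :=
  LieSubalgebra.subset_lieSpan ⟨n, h, Or.inl rfl⟩

lemma W22.W_mem_Wplus (g : W22) {n : ℤ} (h : 1 ≤ n) : g.W n ∈ g.Wplus :=
  LieSubalgebra.subset_lieSpan ⟨n, h, Or.inr rfl⟩

/-- A Lie algebra homomorphism `φ : W_+ → ℂ` is *nonsingular* if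
`φ(L 1) φ(L 2) φ(W 1) φ(W 2) ≠ 0`. -/
noncomputable def W22.Nonsingular (g : W22) (φ : g.Wplus →ₗ⁅ℂ⁆ ℂ) : Prop :=
  φ ⟨g.L 1, g.L_mem_Wplus le_rfl⟩ * φ ⟨g.L 2, g.L_mem_Wplus one_le_two⟩ *
    φ ⟨g.W 1, g.W_mem_Wplus le_rfl⟩ * φ ⟨g.W 2, g.W_mem_Wplus one_le_two⟩ ≠ 0

/-- A vector `v` in a `W(2,2)`-module is a *Whittaker vector* of type `φ` if
`x • v = φ(x) v` for all `x ∈ W_+`. -/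
def W22.IsWhittakerVector (g : W22) (φ : g.Wplus →ₗ⁅ℂ⁆ ℂ) {M : Type}
    [AddCommGroup M] [Module ℂ M] [LieRingModule g.carrier M] [LieModule ℂ g.carrier M]
    (v : M) : Prop :=
  ∀ x : g.Wplus, ⁅(x : g.carrier), v⁆ = φ x • v

/-- The successive action of a list of Lie algebra elements on a module vector:
`act [x₁, …, x_r] v = x₁ ⋯ x_r • v`. -/
def W22.act (g : W22) {M : Type} [AddCommGroup M] [Module ℂ M]
    [LieRingModule g.carrier M] [LieModule ℂ g.carrier M]
    (l : List g.carrier) (v : M) : M :=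
  l.foldr (fun x u => ⁅x, u⁆) v

/-- The action of a polynomial `p(z)` in the central element `z` on a module vector. -/
noncomputable def W22.polyAct (g : W22) {M : Type} [AddCommGroup M] [Module ℂ M]
    [LieRingModule g.carrier M] [LieModule ℂ g.carrier M]
    (p : Polynomial ℂ) (v : M) : M :=
  p.sum fun n a => a • ((fun u => ⁅g.z, u⁆)^[n] v)

/-- `M` with cyclic Whittaker vector `w` is *the* universal Whittaker module `M_φ` of
type `φ`: `w` is a cyclic Whittaker vector and for every module `V` with a Whittaker
vector `v` of type `φ` there is a unique `W(2,2)`-module homomorphism `M → V`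
sending `w` to `v`. -/
structure W22.IsUniversalWhittaker (g : W22) (φ : g.Wplus →ₗ⁅ℂ⁆ ℂ) (M : Type)
    [AddCommGroup M] [Module ℂ M] [LieRingModule g.carrier M] [LieModule ℂ g.carrier M]
    (w : M) : Prop where
  whittaker : g.IsWhittakerVector φ w
  cyclic : LieSubmodule.lieSpan ℂ g.carrier {w} = ⊤
  universal : ∀ (V : Type) [AddCommGroup V] [Module ℂ V] [LieRingModule g.carrier V]
      [LieModule ℂ g.carrier V] (v : V), g.IsWhittakerVector φ v →
      ∃! f : M →ₗ⁅ℂ,g.carrier⁆ V, f w = v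

/-!
Filter `V` by the spans `F_k` of the vectors `y₁ ⋯ y_r • w`, where the `yᵢ` are basis vectors of
nonpositive degree of total weight `< k`, with `L m` and `W m` (`m ≤ 0`) of weight `1 - m` and
`z` of weight `0`. For a positive generator `x`, the operator `x - φ(x)` maps `F_{k+1}` into
`F_k`: it kills `w`, and commuting `x` past `y₁` produces either a basis vector of smaller
weight, the central `z`, or a positive generator, to which the same argument applies on the
shorter monomial. Since `F_0 = 0` and the `F_k` exhaust the cyclic module `V`, applying these
operators to a nonzero vector of a submodule `N` for as long as the result stays nonzero ends
at a nonzero vector of `N` annihilated by all `x - φ(x)`, that is, a Whittaker vector.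
-/

open Set Submodule

theorem exists_ne_zero_forall_eq_zero_of_mapsTo {M ι : Type*} [Zero M] (f : ι → M → M)
    (F : ℕ → Set M) (hF₀ : F 0 ⊆ {0}) (hf : ∀ i k, MapsTo (f i) (F (k + 1)) (F k))
    {N : Set M} (hN : ∀ i, MapsTo (f i) N N) {k : ℕ} {v : M} (hvF : v ∈ F k) (hvN : v ∈ N)
    (hv : v ≠ 0) : ∃ w ∈ N, w ≠ 0 ∧ ∀ i, f i w = 0 := by
  induction k generalizing v with
  | zero => exact absurd (hF₀ hvF) hv
  | succ k ih =>
    by_cases h : ∀ i, f i v = 0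
    · exact ⟨v, hvN, hv, h⟩
    · obtain ⟨i, hi⟩ := not_forall.mp h
      exact ih (hf i k hvF) (hN i hvN) hi

theorem LieSubalgebra.lie_eq_smul_of_forall_mem_lieSpan {R L M : Type*} [CommRing R] [LieRing L]
    [LieAlgebra R L] [AddCommGroup M] [Module R M] [LieRingModule L M] [LieModule R L M]
    {S : Set L} (φ : lieSpan R L S →ₗ⁅R⁆ R) {v : M}
    (h : ∀ x (hx : x ∈ S), ⁅x, v⁆ = φ ⟨x, subset_lieSpan hx⟩ • v) (x : lieSpan R L S) :
    ⁅(x : L), v⁆ = φ x • v := by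
  obtain ⟨x, hx⟩ := x
  induction hx using lieSpan_induction with
  | mem x hx => exact h x hx
  | zero =>
    change ⁅(0 : L), v⁆ = φ 0 • v
    rw [zero_lie, map_zero, zero_smul]
  | add x y hx hy ihx ihy =>
    rw [add_lie, ihx, ihy, ← add_smul, ← map_add]
    rfl
  | smul a x hx ih =>
    rw [smul_lie, ih, smul_smul, ← smul_eq_mul, ← map_smul]
    rfl
  | lie x y hx hy ihx ihy =>
    have hφ : φ ⟨⁅x, y⁆, lie_mem _ hx hy⟩ = 0 := by
      change φ ⁅(⟨x, hx⟩ : lieSpan R L S), ⟨y, hy⟩⁆ = 0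
      rw [LieHom.map_lie, Ring.lie_def, mul_comm, sub_self]
    rw [hφ, zero_smul, lie_lie, ihx, ihy, lie_smul, lie_smul, ihx, ihy, smul_smul, smul_smul,
      mul_comm, sub_self]

theorem lie_mem_of_forall_mem_of_span_eq_top {R L M : Type*} [CommRing R] [LieRing L]
    [LieAlgebra R L] [AddCommGroup M] [Module R M] [LieRingModule L M] [LieModule R L M]
    {s : Set L} (hs : span R s = ⊤) {P : Submodule R M} (hP : ∀ x ∈ s, ∀ u ∈ P, ⁅x, u⁆ ∈ P)
    (x : L) {u : M} (hu : u ∈ P) : ⁅x, u⁆ ∈ P := by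
  have hx : x ∈ span R s := hs ▸ mem_top
  induction hx using span_induction with
  | mem x hx => exact hP x hx u hu
  | zero => simp
  | add x y _ _ hx hy => simpa using add_mem hx hy
  | smul a x _ hx => simpa using P.smul_mem a hx

namespace W22

variable (g : W22)

def degree : (Bool × ℤ) ⊕ Unit → ℤ := Sum.elim Prod.snd fun _ => 0

def weight : (Bool × ℤ) ⊕ Unit → ℕ := Sum.elim (fun p => (1 - p.2).toNat) fun _ => 0

@[simp] lemma basis_inl (b : Bool) (n : ℤ) :
    g.basis (.inl (b, n)) = if b then g.L n else g.W n := by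
  rw [g.basis_eq]; rfl

@[simp] lemma basis_inr (u : Unit) : g.basis (.inr u) = g.z := by
  rw [g.basis_eq]; rfl

lemma basis_inl_mem_Wplus (b : Bool) {n : ℤ} (hn : 1 ≤ n) : g.basis (.inl (b, n)) ∈ g.Wplus := by
  cases b
  · simpa using g.W_mem_Wplus hn
  · simpa using g.L_mem_Wplus hn

lemma lie_basis_inl_z (p : Bool × ℤ) : ⁅g.basis (.inl p), g.z⁆ = 0 := by
  obtain ⟨_ | _, n⟩ := p
  · rw [basis_inl, if_neg Bool.false_ne_true, ← lie_skew, g.bracket_zW, neg_zero]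
  · rw [basis_inl, if_pos rfl, ← lie_skew, g.bracket_zL, neg_zero]

lemma exists_lie_basis_inl (b b' : Bool) (n m : ℤ) :
    ∃ α β : ℂ, ⁅g.basis (.inl (b, n)), g.basis (.inl (b', m))⁆ =
      α • g.basis (.inl (b && b', n + m)) + β • g.z := by
  cases b <;> cases b' <;>
    simp only [basis_inl, Bool.and_false, Bool.and_true, Bool.false_eq_true, if_true, if_false]
  · exact ⟨0, 0, by simp [g.bracket_WW]⟩
  · refine ⟨-((n : ℂ) - m), -(if m + n = 0 then ((m : ℂ) ^ 3 - m) / 12 else 0), ?_⟩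
    rw [← lie_skew, g.bracket_LW, add_comm m n, neg_add, neg_smul, neg_smul]
  · exact ⟨_, _, g.bracket_LW n m⟩
  · exact ⟨_, _, g.bracket_LL n m⟩

variable {V : Type} [AddCommGroup V] [Module ℂ V] [LieRingModule g.carrier V]
  [LieModule ℂ g.carrier V] (v : V)

noncomputable def monomial (l : List ((Bool × ℤ) ⊕ Unit)) : V := g.act (l.map g.basis) v

lemma monomial_nil : g.monomial v [] = v := rfl

lemma monomial_cons (i : (Bool × ℤ) ⊕ Unit) (l : List ((Bool × ℤ) ⊕ Unit)) :
    g.monomial v (i :: l) = ⁅g.basis i, g.monomial v l⁆ := rfl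

noncomputable def filtration (k : ℕ) : Submodule ℂ V :=
  span ℂ (g.monomial v '' {l | (∀ i ∈ l, degree i ≤ 0) ∧ (l.map weight).sum < k})

variable {g v}

lemma monomial_mem_filtration {l : List ((Bool × ℤ) ⊕ Unit)} {k : ℕ}
    (hl : ∀ i ∈ l, degree i ≤ 0) (hk : (l.map weight).sum < k) :
    g.monomial v l ∈ g.filtration v k :=
  subset_span ⟨l, ⟨hl, hk⟩, rfl⟩

variable (g v) in
lemma filtration_mono : Monotone (g.filtration v) := fun _ _ hkk' =>
  span_mono (image_mono fun _ hl => ⟨hl.1, hl.2.trans_le hkk'⟩)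

variable (g v) in
lemma filtration_zero : g.filtration v 0 = ⊥ := by
  simp [filtration]

lemma lie_basis_mem_filtration {i : (Bool × ℤ) ⊕ Unit} (hi : degree i ≤ 0) {k : ℕ} {u : V}
    (hu : u ∈ g.filtration v k) : ⁅g.basis i, u⁆ ∈ g.filtration v (weight i + k) := by
  suffices g.filtration v k ≤ (g.filtration v (weight i + k)).comap
      (LieModule.toEnd ℂ g.carrier V (g.basis i)) from this hu
  rw [filtration, span_le]
  rintro _ ⟨l, ⟨hl, hlk⟩, rfl⟩
  refine monomial_mem_filtration (l := i :: l) ?_ ?_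
  · simpa [hi] using hl
  · simpa using hlk

variable (φ : g.Wplus →ₗ⁅ℂ⁆ ℂ)

variable (g) in
noncomputable def wplusBasis (b : Bool) {n : ℤ} (hn : 1 ≤ n) : g.Wplus :=
  ⟨g.basis (.inl (b, n)), g.basis_inl_mem_Wplus b hn⟩

variable (g) in
noncomputable def shiftedAction (x : g.Wplus) : Module.End ℂ V :=
  LieModule.toEnd ℂ g.carrier V x - φ x • 1

lemma shiftedAction_apply (x : g.Wplus) (u : V) :
    g.shiftedAction φ x u = ⁅(x : g.carrier), u⁆ - φ x • u :=
  rfl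

lemma lie_lie_monomial_mem_filtration {t : List ((Bool × ℤ) ⊕ Unit)}
    (ht : ∀ i ∈ t, degree i ≤ 0)
    (ih : ∀ (b : Bool) (n : ℤ) (hn : 1 ≤ n),
      g.shiftedAction φ (g.wplusBasis b hn) (g.monomial v t) ∈ g.filtration v (t.map weight).sum)
    (b : Bool) {n : ℤ} (hn : 1 ≤ n) {i : (Bool × ℤ) ⊕ Unit} (hi : degree i ≤ 0) :
    ⁅⁅g.basis (.inl (b, n)), g.basis i⁆, g.monomial v t⁆ ∈
      g.filtration v ((i :: t).map weight).sum := by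
  rcases i with ⟨b', m⟩ | _
  · have hm : m ≤ 0 := hi
    obtain ⟨α, β, hαβ⟩ := g.exists_lie_basis_inl b b' n m
    rw [hαβ, add_lie, smul_lie, smul_lie]
    refine add_mem (smul_mem _ _ ?_) (smul_mem _ _ ?_)
    · rcases le_or_gt (n + m) 0 with hnm | hnm
      · rw [← monomial_cons]
        refine monomial_mem_filtration ?_ ?_
        · simpa [degree, hnm] using ht
        · simp only [List.map_cons, List.sum_cons, weight, Sum.elim_inl]
          omega
      · rw [← sub_add_cancel ⁅g.basis (.inl (b && b', n + m)), g.monomial v t⁆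
          (φ (g.wplusBasis (b && b') hnm) • g.monomial v t)]
        have hw : (t.map weight).sum + 1 ≤ ((.inl (b', m) :: t).map weight).sum := by
          simp only [List.map_cons, List.sum_cons, weight, Sum.elim_inl]
          omega
        exact add_mem (filtration_mono g v (by omega) (ih _ _ hnm))
          (smul_mem _ _ (monomial_mem_filtration ht hw))
    · rw [← g.basis_inr (), ← monomial_cons]
      refine monomial_mem_filtration ?_ ?_
      · simpa [degree] using ht
      · simp only [List.map_cons, List.sum_cons, weight, Sum.elim_inl, Sum.elim_inr]
        omega
  · rw [basis_inr, lie_basis_inl_z, zero_lie]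
    exact zero_mem _

variable {φ}

lemma shiftedAction_monomial_mem_filtration (hv : g.IsWhittakerVector φ v)
    {l : List ((Bool × ℤ) ⊕ Unit)} (hl : ∀ i ∈ l, degree i ≤ 0) (b : Bool) {n : ℤ}
    (hn : 1 ≤ n) :
    g.shiftedAction φ (g.wplusBasis b hn) (g.monomial v l) ∈ g.filtration v (l.map weight).sum := by
  induction l generalizing b n with
  | nil =>
    rw [shiftedAction_apply, monomial_nil, hv, sub_self]
    exact zero_mem _
  | cons i t ih =>
    have ht : ∀ j ∈ t, degree j ≤ 0 := fun j hj => hl j (List.mem_cons_of_mem _ hj)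
    have hi : degree i ≤ 0 := hl i List.mem_cons_self
    have hsplit : g.shiftedAction φ (g.wplusBasis b hn) (g.monomial v (i :: t)) =
        ⁅⁅(g.wplusBasis b hn : g.carrier), g.basis i⁆, g.monomial v t⁆ +
          ⁅g.basis i, g.shiftedAction φ (g.wplusBasis b hn) (g.monomial v t)⁆ := by
      rw [shiftedAction_apply, shiftedAction_apply, monomial_cons, leibniz_lie, lie_sub, lie_smul]
      abel
    rw [hsplit]
    refine add_mem (lie_lie_monomial_mem_filtration φ ht (fun b n hn => ih ht b hn) b hn hi) ?_
    simpa using lie_basis_mem_filtration hi (ih ht b hn)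

lemma shiftedAction_mem_filtration (hv : g.IsWhittakerVector φ v) (b : Bool) {n : ℤ}
    (hn : 1 ≤ n) {k : ℕ} {u : V} (hu : u ∈ g.filtration v (k + 1)) :
    g.shiftedAction φ (g.wplusBasis b hn) u ∈ g.filtration v k := by
  suffices g.filtration v (k + 1) ≤
      (g.filtration v k).comap (g.shiftedAction φ (g.wplusBasis b hn)) from this hu
  rw [filtration, span_le]
  rintro _ ⟨l, ⟨hl, hlk⟩, rfl⟩
  exact filtration_mono g v (Nat.lt_succ_iff.mp hlk)
    (shiftedAction_monomial_mem_filtration hv hl b hn)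

lemma exists_lie_basis_mem_filtration (hv : g.IsWhittakerVector φ v) (i : (Bool × ℤ) ⊕ Unit)
    {k : ℕ} {u : V} (hu : u ∈ g.filtration v k) : ∃ k', ⁅g.basis i, u⁆ ∈ g.filtration v k' := by
  rcases le_or_gt (degree i) 0 with hi | hi
  · exact ⟨_, lie_basis_mem_filtration hi hu⟩
  · rcases i with ⟨b, n⟩ | _
    · have hn : 1 ≤ n := hi
      have hu' := filtration_mono g v k.le_succ hu
      refine ⟨k + 1, ?_⟩
      rw [← sub_add_cancel ⁅g.basis (.inl (b, n)), u⁆ (φ (g.wplusBasis b hn) • u)]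
      exact add_mem (filtration_mono g v k.le_succ (shiftedAction_mem_filtration hv b hn hu'))
        (smul_mem _ _ hu')
    · exact (lt_irrefl (0 : ℤ) hi).elim

lemma exists_mem_filtration (hv : g.IsWhittakerVector φ v)
    (hcyc : LieSubmodule.lieSpan ℂ g.carrier {v} = ⊤) (u : V) : ∃ k, u ∈ g.filtration v k := by
  have hmem (u : V) : u ∈ ⨆ k, g.filtration v k ↔ ∃ k, u ∈ g.filtration v k :=
    mem_iSup_of_directed _ (filtration_mono g v).directed_le
  let P : LieSubmodule ℂ g.carrier V :=
    { ⨆ k, g.filtration v k with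
      lie_mem := fun {x _} hu => lie_mem_of_forall_mem_of_span_eq_top g.basis.span_eq
        (by
          rintro _ ⟨i, rfl⟩ u hu
          obtain ⟨k, hk⟩ := (hmem u).mp hu
          exact (hmem _).mpr (exists_lie_basis_mem_filtration hv i hk)) x hu }
  have hvP : v ∈ P := (hmem v).mpr ⟨1, monomial_mem_filtration (l := []) (by simp) (by simp)⟩
  have hP : P = ⊤ := top_unique (hcyc ▸ LieSubmodule.lieSpan_le.mpr (by simpa using hvP))
  have hu : u ∈ P := hP ▸ LieSubmodule.mem_top u
  exact (hmem u).mp hu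

lemma wplusBasis_true {n : ℤ} (hn : 1 ≤ n) : g.wplusBasis true hn = ⟨g.L n, g.L_mem_Wplus hn⟩ :=
  Subtype.ext (by simp [wplusBasis])

lemma wplusBasis_false {n : ℤ} (hn : 1 ≤ n) : g.wplusBasis false hn = ⟨g.W n, g.W_mem_Wplus hn⟩ :=
  Subtype.ext (by simp [wplusBasis])

lemma isWhittakerVector_of_shiftedAction_eq_zero {u : V}
    (hu : ∀ (b : Bool) (n : ℤ) (hn : 1 ≤ n), g.shiftedAction φ (g.wplusBasis b hn) u = 0) :
    g.IsWhittakerVector φ u :=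
  LieSubalgebra.lie_eq_smul_of_forall_mem_lieSpan φ <| by
    rintro _ ⟨n, hn, rfl | rfl⟩
    · have h := hu true n hn
      rwa [wplusBasis_true, shiftedAction_apply, sub_eq_zero] at h
    · have h := hu false n hn
      rwa [wplusBasis_false, shiftedAction_apply, sub_eq_zero] at h

end W22

theorem w22_nontrivial_whittaker_submodule_general (g : W22) (φ : g.Wplus →ₗ⁅ℂ⁆ ℂ)
    (V : Type) [AddCommGroup V] [Module ℂ V]
    [LieRingModule g.carrier V] [LieModule ℂ g.carrier V] (wv : V)
    (hwv : g.IsWhittakerVector φ wv) (hcyc : LieSubmodule.lieSpan ℂ g.carrier {wv} = ⊤) :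
    ∀ N : LieSubmodule ℂ g.carrier V, N ≠ ⊥ →
      ∃ v : V, v ≠ 0 ∧ v ∈ N ∧ g.IsWhittakerVector φ v ∧
        LieSubmodule.lieSpan ℂ g.carrier {v} ≤ N := by
  intro N hN
  obtain ⟨u, huN, hu⟩ : ∃ u ∈ N, u ≠ 0 := by
    by_contra! h
    exact hN ((LieSubmodule.eq_bot_iff N).mpr h)
  obtain ⟨k, hk⟩ := g.exists_mem_filtration hwv hcyc u
  obtain ⟨v, hvN, hv, hvφ⟩ := exists_ne_zero_forall_eq_zero_of_mapsTo
    (fun p : {p : Bool × ℤ // 1 ≤ p.2} => g.shiftedAction φ (g.wplusBasis p.1.1 p.2))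
    (fun k => g.filtration wv k) (by simp [W22.filtration_zero])
    (fun _ _ _ h => W22.shiftedAction_mem_filtration hwv _ _ h)
    (fun _ _ h => N.sub_mem (N.lie_mem h) (N.smul_mem _ h)) hk huN hu
  exact ⟨v, hv, hvN, W22.isWhittakerVector_of_shiftedAction_eq_zero fun b n hn => hvφ ⟨(b, n), hn⟩,
    LieSubmodule.lieSpan_le.mpr (singleton_subset_iff.mpr hvN)⟩

/-- Every nontrivial submodule of a Whittaker module of type `φ` contains a nontrivial
Whittaker submodule of type `φ` (namely the submodule generated by a nonzero Whittaker
vector lying in it). -/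
theorem w22_nontrivial_whittaker_submodule (g : W22) (φ : g.Wplus →ₗ⁅ℂ⁆ ℂ)
    (hφ : g.Nonsingular φ) (V : Type) [AddCommGroup V] [Module ℂ V]
    [LieRingModule g.carrier V] [LieModule ℂ g.carrier V] (wv : V)
    (hwv : g.IsWhittakerVector φ wv) (hcyc : LieSubmodule.lieSpan ℂ g.carrier {wv} = ⊤) :
    ∀ N : LieSubmodule ℂ g.carrier V, N ≠ ⊥ →
      ∃ v : V, v ≠ 0 ∧ v ∈ N ∧ g.IsWhittakerVector φ v ∧
        LieSubmodule.lieSpan ℂ g.carrier {v} ≤ N :=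
  w22_nontrivial_whittaker_submodule_general g φ V wv hwv hcyc
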